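/- arXiv:0902.3693 — 2 statements merged into one kernel-verified Lean document; each statement's English description precedes it below -/
import Mathlib

section
/- In the group K = ⟨α₁,…,α_l, β ∣ α₁ᵖ = α₂ᑫ, α₂ᵖ = α₃ᑫ, …, α_{l−1}ᵖ = α_lᑫ, β⁻¹α_lᵖβ = α₁ᑫ⟩, the relation β⁻¹αᵢ^{pˡ}β = αᵢ^{qˡ} holds for each i with 1 ≤ i ≤ l. -/
/-! Write `l = i + k + 1`. Since powers of one element commute, the chain of relations carries
`α i ^ p ^ k` to `α (i + k) ^ q ^ k`; so `α i ^ p ^ l` becomes a power of `α (l - 1) ^ p`, the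
`β`-relation turns it into a power of `α 0 ^ q`, and the chain from `α 0` up to `α i` turns the
remaining factors `p` into `q`. -/

theorem pow_pow_eq_pow_pow_of_chain {M : Type*} [Monoid M] {p q l : ℕ} {a : ℕ → M}
    (hrel : ∀ j, j + 1 < l → a j ^ p = a (j + 1) ^ q) :
    ∀ i k, i + k < l → a i ^ p ^ k = a (i + k) ^ q ^ k := by
  intro i k
  induction k with
  | zero => simp
  | succ k ih =>
    intro hik
    calc a i ^ p ^ (k + 1) = (a (i + k) ^ q ^ k) ^ p := by
          rw [pow_succ, pow_mul, ih (by omega)]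
      _ = (a (i + k + 1) ^ q) ^ q ^ k := by rw [pow_right_comm, hrel _ (by omega)]
      _ = a (i + (k + 1)) ^ q ^ (k + 1) := by rw [← pow_mul, ← pow_succ', add_assoc]

theorem conj_pow_pow_general {G : Type*} [Group G] (p q l : ℕ)
    (α : ℕ → G) (β : G)
    (hrel : ∀ i, i + 1 < l → (α i) ^ p = (α (i + 1)) ^ q)
    (hrelβ : β⁻¹ * (α (l - 1)) ^ p * β = (α 0) ^ q) :
    ∀ i < l, β⁻¹ * (α i) ^ (p ^ l) * β = (α i) ^ (q ^ l) := by
  intro i hi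
  obtain ⟨k, rfl⟩ : ∃ k, l = i + k + 1 := ⟨l - i - 1, by omega⟩
  rw [Nat.add_sub_cancel] at hrelβ
  have down : α i ^ p ^ k = α (i + k) ^ q ^ k :=
    pow_pow_eq_pow_pow_of_chain hrel i k (by omega)
  have up : α 0 ^ p ^ i = α i ^ q ^ i := by
    simpa using pow_pow_eq_pow_pow_of_chain hrel 0 i (by omega)
  calc β⁻¹ * α i ^ p ^ (i + k + 1) * β
        = β⁻¹ * (α (i + k) ^ p) ^ (q ^ k * p ^ i) * β := by
          rw [show p ^ (i + k + 1) = p ^ k * p ^ (i + 1) by ring, pow_mul, down,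
            ← pow_mul, ← pow_mul]
          ring_nf
    _ = (β⁻¹ * α (i + k) ^ p * β) ^ (q ^ k * p ^ i) := by
          simpa using (conj_pow (a := β⁻¹)).symm
    _ = (α 0 ^ p ^ i) ^ q ^ (k + 1) := by
          rw [hrelβ, ← pow_mul, ← pow_mul]
          ring_nf
    _ = α i ^ q ^ (i + k + 1) := by
          rw [up, ← pow_mul, ← pow_add, add_assoc]

/-- In any group in which generators `α 0, …, α (l-1), β` satisfy the relations
`(α i)ᵖ = (α (i+1))ᑫ` for `0 ≤ i < l - 1` and `β⁻¹ (α (l-1))ᵖ β = (α 0)ᑫ`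
(the relations of the group `K`), the relation `β⁻¹ (α i)^(pˡ) β = (α i)^(qˡ)`
holds for every `i < l`. -/
theorem conj_pow_pow {G : Type*} [Group G] (p q l : ℕ) (hl : 0 < l)
    (α : ℕ → G) (β : G)
    (hrel : ∀ i, i + 1 < l → (α i) ^ p = (α (i + 1)) ^ q)
    (hrelβ : β⁻¹ * (α (l - 1)) ^ p * β = (α 0) ^ q) :
    ∀ i < l, β⁻¹ * (α i) ^ (p ^ l) * β = (α i) ^ (q ^ l) :=
  conj_pow_pow_general p q l α β hrel hrelβ
end

section
/- Let p, q be integers with a common factor k > 1, say p = kp', q = kq'. The kernel of the homomorphism BS(p,q) → ℤ/k sending b to 0 and a to 1 is an index-k subgroup, and it admits a surjection onto the free group of rank k. -/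
/-!
Map `BS(p,q)` to `F(A) ⋊ A`, where `A = ℤ/k` acts on the free group `F(A)` by translating the
generators, via `a ↦ 1 ∈ A` and `b ↦ x₀ ∈ F(A)`; the relation holds because `p • 1 = q • 1 = 0`
in `A`. The `A`-component of this map is `ψ`, so on `ker ψ` the `F(A)`-component is a
homomorphism, and it sends `aⁱ b a⁻ⁱ ∈ ker ψ` to the free generator `xᵢ`, hence is onto.
Since `ψ` itself is onto, `ker ψ` has index `|A| = k`.
-/

open SemidirectProduct

namespace FreeGroup

variable (A : Type*) [AddGroup A]

def shiftAut : Multiplicative A →* MulAut (FreeGroup A) where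
  toFun t := freeGroupCongr (Equiv.addLeft t.toAdd)
  map_one' := MulEquiv.toMonoidHom_injective <| ext_hom _ _ fun i => by simp
  map_mul' s t := MulEquiv.toMonoidHom_injective <| ext_hom _ _ fun i => by simp [add_assoc]

variable {A}

@[simp]
theorem shiftAut_of (t : Multiplicative A) (i : A) :
    shiftAut A t (of i) = of (t.toAdd + i) := by
  simp [shiftAut]

end FreeGroup

namespace SemidirectProduct

variable {G N H : Type*} [Group G] [Group N] [Group H] {φ : H →* MulAut N}

def leftOfKer (F : G →* N ⋊[φ] H) : (rightHom.comp F).ker →* N where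
  toFun g := (F g).left
  map_one' := by simp
  map_mul' g h := by
    have hg : (F g).right = 1 := g.2
    simp [hg]

@[simp]
theorem leftOfKer_apply (F : G →* N ⋊[φ] H) (g : (rightHom.comp F).ker) :
    leftOfKer F g = (F g).left := rfl

end SemidirectProduct

abbrev BaumslagSolitar (p q : ℤ) : Type :=
  PresentedGroup
    ({(FreeGroup.of false)⁻¹ * (FreeGroup.of true) ^ p * FreeGroup.of false *
      (FreeGroup.of true) ^ (-q)} : Set (FreeGroup Bool))

namespace BaumslagSolitar

variable {p q : ℤ} {G : Type*} [Group G]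

def a : BaumslagSolitar p q := PresentedGroup.of true

def b : BaumslagSolitar p q := PresentedGroup.of false

def lift (x y : G) (h : y⁻¹ * x ^ p * y = x ^ q) : BaumslagSolitar p q →* G :=
  PresentedGroup.toGroup (f := fun c => if c then x else y) <| by
    rintro _ rfl
    simp [h]

@[simp]
theorem lift_a (x y : G) (h : y⁻¹ * x ^ p * y = x ^ q) : lift x y h a = x :=
  PresentedGroup.toGroup.of _

@[simp]
theorem lift_b (x y : G) (h : y⁻¹ * x ^ p * y = x ^ q) : lift x y h b = y :=
  PresentedGroup.toGroup.of _

theorem hom_ext {f g : BaumslagSolitar p q →* G} (ha : f a = g a) (hb : f b = g b) : f = g :=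
  PresentedGroup.ext fun | true => ha | false => hb

variable {A : Type*} [AddGroup A]

def toShift (t : A) (hp : p • t = 0) (hq : q • t = 0) :
    BaumslagSolitar p q →* FreeGroup A ⋊[FreeGroup.shiftAut A] Multiplicative A :=
  lift (inr (.ofAdd t)) (inl (FreeGroup.of 0)) <| by
    rw [← map_zpow inr, ← map_zpow inr, ← ofAdd_zsmul, ← ofAdd_zsmul, hp, hq]
    simp

variable (t : A) (hp : p • t = 0) (hq : q • t = 0)

@[simp]
theorem toShift_a : toShift t hp hq a = inr (.ofAdd t) := lift_a ..

@[simp]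
theorem toShift_b : toShift t hp hq b = inl (FreeGroup.of 0) := lift_b ..

theorem rightHom_toShift_zpow_a (n : ℤ) :
    rightHom (toShift t hp hq (a ^ n)) = .ofAdd (n • t) := by
  rw [map_zpow, toShift_a, ← map_zpow, rightHom_inr, ofAdd_zsmul]

theorem toShift_conj_b (n : ℤ) :
    toShift t hp hq (a ^ n * b * (a ^ n)⁻¹) = inl (FreeGroup.of (n • t)) := by
  rw [map_mul, map_mul, map_inv, map_zpow, toShift_a, toShift_b, ← map_zpow, ← map_inv,
    ← inl_aut, FreeGroup.shiftAut_of, ← ofAdd_zsmul, toAdd_ofAdd, add_zero]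

theorem rightHom_comp_toShift_surjective (ht : ∀ x : A, ∃ n : ℤ, n • t = x) :
    Function.Surjective (rightHom.comp (toShift t hp hq)) := by
  intro x
  obtain ⟨n, hn⟩ := ht x.toAdd
  exact ⟨a ^ n, by rw [MonoidHom.comp_apply, rightHom_toShift_zpow_a, hn, ofAdd_toAdd]⟩

theorem leftOfKer_toShift_surjective (ht : ∀ x : A, ∃ n : ℤ, n • t = x) :
    Function.Surjective (leftOfKer (toShift t hp hq)) := by
  rw [← MonoidHom.range_eq_top, eq_top_iff, ← FreeGroup.closure_range_of, Subgroup.closure_le]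
  rintro _ ⟨x, rfl⟩
  obtain ⟨n, rfl⟩ := ht x
  have hker : a ^ n * b * (a ^ n)⁻¹ ∈ (rightHom.comp (toShift t hp hq)).ker := by
    rw [MonoidHom.mem_ker, MonoidHom.comp_apply, toShift_conj_b, rightHom_inl]
  exact ⟨⟨_, hker⟩, by rw [leftOfKer_apply, toShift_conj_b, left_inl]⟩

end BaumslagSolitar

open FreeGroup in
/-- Let `p, q` be integers with a common factor `k > 1`.  In the Baumslag–Solitar group
`BS(p,q) = ⟨a, b ∣ b⁻¹ aᵖ b = aᑫ⟩` (presented on `a = of true`, `b = of false`), the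
kernel of the homomorphism `BS(p,q) → ℤ/k` sending `b` to `0` and `a` to `1` is a
subgroup of index `k`, and it admits a surjection onto the free group of rank `k`. -/
theorem baumslag_solitar_kernel_surjects_free (p q : ℤ) (k : ℕ) (hk : 1 < k)
    (hp : (k : ℤ) ∣ p) (hq : (k : ℤ) ∣ q)
    (ψ : PresentedGroup
        ({(of false)⁻¹ * (of true) ^ p * of false * (of true) ^ (-q)} :
          Set (FreeGroup Bool)) →* Multiplicative (ZMod k))
    (hψa : ψ (PresentedGroup.of true) = Multiplicative.ofAdd (1 : ZMod k))
    (hψb : ψ (PresentedGroup.of false) = 1) :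
    ψ.ker.index = k ∧ ∃ f : ψ.ker →* FreeGroup (Fin k), Function.Surjective f := by
  change ψ BaumslagSolitar.a = _ at hψa
  change ψ BaumslagSolitar.b = _ at hψb
  have : NeZero k := ⟨by omega⟩
  have hp₁ : p • (1 : ZMod k) = 0 := by
    rwa [zsmul_one, ZMod.intCast_zmod_eq_zero_iff_dvd]
  have hq₁ : q • (1 : ZMod k) = 0 := by
    rwa [zsmul_one, ZMod.intCast_zmod_eq_zero_iff_dvd]
  have hgen : ∀ x : ZMod k, ∃ n : ℤ, n • (1 : ZMod k) = x := fun x => by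
    simpa only [zsmul_one] using ZMod.intCast_surjective x
  obtain rfl : rightHom.comp (BaumslagSolitar.toShift 1 hp₁ hq₁) = ψ :=
    BaumslagSolitar.hom_ext (by simpa using hψa.symm) (by simpa using hψb.symm)
  constructor
  · rw [Subgroup.index_ker, MonoidHom.range_eq_top_of_surjective _
      (BaumslagSolitar.rightHom_comp_toShift_surjective 1 hp₁ hq₁ hgen), Subgroup.card_top,
      Nat.card_congr Multiplicative.toAdd, Nat.card_zmod]
  · let e := freeGroupCongr (ZMod.finEquiv k).symm.toEquiv
    exact ⟨e.toMonoidHom.comp (leftOfKer _),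
      e.surjective.comp (BaumslagSolitar.leftOfKer_toShift_surjective 1 hp₁ hq₁ hgen)⟩
end
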